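/- arXiv:1411.3468 — 5 statements merged into one kernel-verified Lean document; each statement's English description precedes it below -/
import Mathlib

section
/- Let A, B ∈ ℚ with 0, A, B pairwise distinct, and let E be the elliptic curve over ℚ given by Y² = X(X − A)(X − B). Assume that E(ℚ) contains no point of order 4 (so that C₂ × C₂ ≤ E(ℚ)_tors but E(ℚ)_tors contains no C₂ × C₄). Then the set of squarefree integers D with D ∉ {0,1} such that E(ℚ(√D)) contains a subgroup isomorphic to C₂ × C₄ has at most 3 elements. -/
/-!
Since `E[2] ⊆ E(ℚ)`, a copy of `C₂ × C₄` in `E(ℚ(√D))` amounts to a point `P` of order `4`.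
Then `2P = (e, 0)` for a root `e` of `f = X(X - A)(X - B)`, and the doubling formula forces
`(x(P) - e)² = (e - p)(e - q)`, where `p, q` are the other two roots. If `(e - p)(e - q)` is not a
rational square, it is a square in `ℚ(√D)`, which fixes the square class of `D`. Otherwise
`x(P) = e ± c` is rational, so `y(P)² = f(e ± c)` is not a rational square (there is no rational
point of order `4`), and `D ≡ f(e ± c)` modulo squares; both signs give the same class because
`f(e + c) f(e - c)` is a square. Hence each of the three roots allows at most one squarefree `D`.
-/

open WeierstrassCurve WeierstrassCurve.Affine Module

lemma Int.eq_of_squarefree_of_isSquare_mul {a b : ℤ} (ha : Squarefree a) (hb : Squarefree b)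
    (hab : IsSquare (a * b)) : a = b := by
  obtain ⟨m, hm⟩ := hab
  obtain ⟨k, rfl⟩ : a ∣ m := (ha.dvd_pow_iff_dvd two_ne_zero).1 ⟨b, by rw [sq, ← hm]⟩
  have hb' : b = a * (k * k) := mul_left_cancel₀ ha.ne_zero (by rw [hm]; ring)
  rcases Int.isUnit_iff.mp (hb k ⟨a, by rw [hb']; ring⟩) with rfl | rfl <;> simp [hb']

lemma Int.not_isSquare_intCast_of_squarefree {D : ℤ} (hD : Squarefree D) (h1 : D ≠ 1) :
    ¬IsSquare (D : ℚ) := by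
  intro hsq
  obtain ⟨m, rfl⟩ := Rat.isSquare_intCast_iff.1 hsq
  rcases Int.isUnit_iff.mp (hD m ⟨1, by ring⟩) with rfl | rfl <;> simp at h1

lemma isSquare_mul_of_isSquare_algebraMap {F K : Type*} [Field F] [Field K] [Algebra F K]
    (hK : finrank F K = 2) (h2 : (2 : F) ≠ 0) {a b : F}
    (ha : ¬IsSquare a) (hb : ¬IsSquare b) (ha' : IsSquare (algebraMap F K a))
    (hb' : IsSquare (algebraMap F K b)) : IsSquare (a * b) := by
  obtain ⟨u, hu⟩ := ha'
  obtain ⟨v, hv⟩ := hb'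
  have hu_notMem : ∀ s : F, algebraMap F K s ≠ u := by
    rintro s rfl
    exact ha ⟨s, (algebraMap F K).injective (by rw [hu, map_mul])⟩
  have hli : LinearIndependent F ![1, u] :=
    (LinearIndependent.pair_iff' one_ne_zero).2 fun s ↦ by
      rw [← Algebra.algebraMap_eq_smul_one]; exact hu_notMem s
  have hspan := hli.span_eq_top_of_card_eq_finrank (by simp [hK])
  obtain ⟨s, t, hc⟩ : ∃ s t : F, algebraMap F K s + algebraMap F K t * u = v := by
    obtain ⟨c, hc⟩ :=
      (Submodule.mem_span_range_iff_exists_fun F).1 (hspan ▸ Submodule.mem_top : v ∈ _)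
    refine ⟨c 0, c 1, ?_⟩
    simpa only [Fin.sum_univ_two, Matrix.cons_val_zero, Matrix.cons_val_one, Algebra.smul_def,
      mul_one] using hc
  -- squaring `√b = s + t √a` puts `2 s t √a` into `F`
  have hv' : algebraMap F K (b - s ^ 2 - t ^ 2 * a) = algebraMap F K (2 * s * t) * u := by
    simp only [map_sub, map_mul, map_pow, hv, hu, ← hc, map_ofNat]; ring
  have hst : 2 * s * t = 0 := by
    by_contra hst
    refine hu_notMem ((b - s ^ 2 - t ^ 2 * a) / (2 * s * t)) ?_
    rw [map_div₀, hv', mul_div_cancel_left₀ _ (by simpa using hst)]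
  rcases mul_eq_zero.1 hst with hs | rfl
  · have hs : s = 0 := (mul_eq_zero.1 hs).resolve_left h2
    refine ⟨t * a, (algebraMap F K).injective ?_⟩
    simp only [map_mul, hu, hv, ← hc, hs, map_zero, zero_add]; ring
  · exact absurd ⟨s, (algebraMap F K).injective (by simp [hv, ← hc])⟩ hb

namespace WeierstrassCurve

variable {R : Type*} [CommRing R] (e p q : R)

/-- The curve `Y² = (X - e)(X - p)(X - q)`. -/
def ofRoots : WeierstrassCurve R :=
  ⟨0, -(e + p + q), 0, e * p + e * q + p * q, -(e * p * q)⟩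

lemma ofRoots_rotate : ofRoots e p q = ofRoots p q e := by
  ext <;> simp only [ofRoots] <;> ring

lemma map_ofRoots {S : Type*} [CommRing S] (f : R →+* S) :
    (ofRoots e p q).map f = ofRoots (f e) (f p) (f q) := by
  ext <;> simp [ofRoots]

lemma baseChange_ofRoots {A : Type*} [CommRing A] [Algebra R A] :
    (ofRoots e p q).baseChange A =
      ofRoots (algebraMap R A e) (algebraMap R A p) (algebraMap R A q) :=
  map_ofRoots e p q _

variable {e p q} {x y : R}

lemma Affine.equation_ofRoots :
    (ofRoots e p q).toAffine.Equation x y ↔ y ^ 2 = (x - e) * (x - p) * (x - q) := by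
  rw [equation_iff]
  simp only [ofRoots]
  constructor <;> intro h <;> linear_combination h

lemma Affine.negY_ofRoots : (ofRoots e p q).toAffine.negY x y = -y := by
  simp [negY, ofRoots]

end WeierstrassCurve

namespace WeierstrassCurve.Affine

variable {K : Type*} [Field K] [DecidableEq K] {W : WeierstrassCurve K} {e p q x y : K}

lemma sq_sub_eq_of_addX_self_eq (h2 : (2 : K) ≠ 0) (hW : W = ofRoots e p q)
    (h : W.toAffine.Equation x y) (hy : y ≠ 0)
    (hx : W.toAffine.addX x x (W.toAffine.slope x x y y) = e) :
    (x - e) ^ 2 = (e - p) * (e - q) := by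
  subst hW
  have h2y : 2 * y ≠ 0 := mul_ne_zero h2 hy
  have hslope : (ofRoots e p q).toAffine.slope x x y y * (2 * y) =
      3 * x ^ 2 - 2 * (e + p + q) * x + (e * p + e * q + p * q) := by
    rw [slope_of_Y_ne rfl (by rw [negY_ofRoots]; exact fun h ↦ h2y (by linear_combination h)),
      negY_ofRoots, div_mul_eq_mul_div, div_eq_iff (by rwa [sub_neg_eq_add, ← two_mul])]
    simp only [ofRoots]; ring
  rw [equation_ofRoots] at h
  rw [addX] at hx
  generalize (ofRoots e p q).toAffine.slope x x y y = ℓ at hslope hx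
  simp only [ofRoots] at hx
  have hℓ : ℓ ^ 2 = 2 * x - p - q := by linear_combination hx
  -- `f'(x)² - 4 f(x) (2x - p - q) = ((x - e)² - (e - p)(e - q))²` for `f = (X - e)(X - p)(X - q)`
  have : ((x - e) ^ 2 - (e - p) * (e - q)) ^ 2 = 0 := by
    linear_combination
      (-(3 * x ^ 2 - 2 * (e + p + q) * x + (e * p + e * q + p * q)) - ℓ * (2 * y)) * hslope
        + 4 * y ^ 2 * hℓ + 4 * (2 * x - p - q) * h
  exact sub_eq_zero.1 (pow_eq_zero_iff two_ne_zero |>.1 this)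

namespace Point

lemma Y_eq_zero_of_add_self_eq_zero (h2 : (2 : K) ≠ 0) (hW : W = ofRoots e p q)
    {h : W.toAffine.Nonsingular x y} (hP : some x y h + some x y h = 0) : y = 0 := by
  subst hW
  rw [add_eq_zero_iff_eq_neg, neg_some, some.injEq, negY_ofRoots] at hP
  exact (mul_eq_zero.1 (by linear_combination hP.2 : 2 * y = 0)).resolve_left h2

lemma exists_sq_sub_eq_of_addOrderOf_eq_four (h2 : (2 : K) ≠ 0) (hW : W = ofRoots e p q)
    {P : W.toAffine.Point} (hP : addOrderOf P = 4) :
    ∃ x y, ∃ h : W.toAffine.Nonsingular x y, P = some x y h ∧ ((x - e) ^ 2 = (e - p) * (e - q) ∨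
      (x - p) ^ 2 = (p - q) * (p - e) ∨ (x - q) ^ 2 = (q - e) * (q - p)) := by
  subst hW
  have h2P : P + P ≠ 0 := fun h ↦ by
    have := addOrderOf_dvd_of_nsmul_eq_zero (two_nsmul P ▸ h)
    rw [hP] at this
    norm_num at this
  have h4P : P + P + (P + P) = 0 := by
    rw [← addOrderOf_nsmul_eq_zero P, hP]
    abel
  obtain _ | ⟨x, y, h⟩ := P
  · exact absurd rfl h2P
  have hyneg : y ≠ (ofRoots e p q).toAffine.negY x y := fun hy ↦ h2P (add_self_of_Y_eq hy)
  have hy : y ≠ 0 := fun hy ↦ hyneg (by rw [negY_ofRoots, hy]; simp)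
  rw [add_self_of_Y_ne hyneg] at h4P
  have hroot := (nonsingular_add h h fun hx ↦ hyneg hx.2).1
  rw [Y_eq_zero_of_add_self_eq_zero h2 rfl h4P, equation_ofRoots] at hroot
  refine ⟨x, y, h, rfl, ?_⟩
  rw [zero_pow two_ne_zero, eq_comm, mul_eq_zero, mul_eq_zero] at hroot
  obtain (he | hp) | hq := hroot
  · exact .inl (sq_sub_eq_of_addX_self_eq h2 rfl h.1 hy (sub_eq_zero.1 he))
  · exact .inr <| .inl <| sq_sub_eq_of_addX_self_eq h2 (ofRoots_rotate e p q) h.1 hy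
      (sub_eq_zero.1 hp)
  · exact .inr <| .inr <| sq_sub_eq_of_addX_self_eq h2
      ((ofRoots_rotate e p q).trans (ofRoots_rotate p q e)) h.1 hy (sub_eq_zero.1 hq)

lemma exists_addOrderOf_eq_of_baseChange {F L : Type*} [Field F] [Field L] [Algebra F L]
    [DecidableEq F] [DecidableEq L] {W : WeierstrassCurve F} {x y : F}
    (h : (W⁄L).Nonsingular (algebraMap F L x) (algebraMap F L y)) :
    ∃ P : W.toAffine.Point, addOrderOf P = addOrderOf (some _ _ h) := by
  have h₀ : (W⁄F).Nonsingular x y :=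
    (baseChange_nonsingular W.toAffine (Algebra.ofId F L).injective x y).1 h
  exact ⟨some _ _ h₀,
    (addOrderOf_injective _ (map_injective (Algebra.ofId F L)) (some _ _ h₀)).symm⟩

end Point

end WeierstrassCurve.Affine

section HalvingClass

variable {F K : Type*} [Field F] [Field K] [Algebra F K]

open scoped Classical in
/-- The square class of `D` for which `(e, 0)` becomes divisible by `2` on `ofRoots e p q` over
`F(√D)`: that of `(e - p)(e - q)`, or, if `(e - p)(e - q) = c²`, that of
`f(e + c) = c (e + c - p) (e + c - q)` where `f = (X - e)(X - p)(X - q)`. -/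
noncomputable def halvingClass (e p q : F) : F :=
  if h : IsSquare ((e - p) * (e - q)) then
    h.choose * (e + h.choose - p) * (e + h.choose - q)
  else
    (e - p) * (e - q)

variable [DecidableEq F] [DecidableEq K] (hK : finrank F K = 2) (h2 : (2 : F) ≠ 0) {D : F}
  (hD : ¬IsSquare D) (hDK : IsSquare (algebraMap F K D)) {W : WeierstrassCurve F} {e p q : F}
  (hW : W = ofRoots e p q) (h4 : ∀ P : W.toAffine.Point, addOrderOf P ≠ 4)
include hK h2 hD hDK hW h4

lemma isSquare_mul_of_addOrderOf_eq_four_of_X_eq_algebraMap {r : F} {y : K}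
    (h : (W⁄K).Nonsingular (algebraMap F K r) y) (hP : addOrderOf (Point.some _ _ h) = 4) :
    (r - e) * (r - p) * (r - q) ≠ 0 ∧ IsSquare (D * ((r - e) * (r - p) * (r - q))) := by
  subst hW
  have hy : algebraMap F K ((r - e) * (r - p) * (r - q)) = y * y := by
    have := h.1
    rw [Affine.baseChange, baseChange_ofRoots, equation_ofRoots] at this
    rw [map_mul, map_mul, map_sub, map_sub, map_sub, ← this, sq]
  have hm : ¬IsSquare ((r - e) * (r - p) * (r - q)) := by
    rintro ⟨t, ht⟩
    obtain ⟨t', rfl⟩ : ∃ t', y = algebraMap F K t' := by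
      rw [ht, map_mul, ← sub_eq_zero, mul_self_sub_mul_self, mul_eq_zero] at hy
      rcases hy with hy | hy
      · exact ⟨-t, by rw [map_neg]; linear_combination hy⟩
      · exact ⟨t, by linear_combination -hy⟩
    obtain ⟨P, hP'⟩ := Point.exists_addOrderOf_eq_of_baseChange h
    exact h4 P (hP'.trans hP)
  exact ⟨fun h0 ↦ hm ⟨0, by rw [h0, mul_zero]⟩,
    isSquare_mul_of_isSquare_algebraMap hK h2 hD hm hDK ⟨y, hy⟩⟩

lemma isSquare_mul_halvingClass (hep : e ≠ p) (heq : e ≠ q) (hpq : p ≠ q) {x y : K}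
    (h : (W⁄K).Nonsingular x y) (hP : addOrderOf (Point.some _ _ h) = 4)
    (hx : (x - algebraMap F K e) ^ 2 =
      (algebraMap F K e - algebraMap F K p) * (algebraMap F K e - algebraMap F K q)) :
    halvingClass e p q ≠ 0 ∧ IsSquare (D * halvingClass e p q) := by
  have hd : (e - p) * (e - q) ≠ 0 := mul_ne_zero (sub_ne_zero.2 hep) (sub_ne_zero.2 heq)
  by_cases hsq : IsSquare ((e - p) * (e - q))
  · obtain ⟨hc, hm⟩ : (e - p) * (e - q) = hsq.choose * hsq.choose ∧
        halvingClass e p q = hsq.choose * (e + hsq.choose - p) * (e + hsq.choose - q) :=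
      ⟨hsq.choose_spec, by rw [halvingClass, dif_pos hsq]⟩
    generalize hsq.choose = c at hc hm
    rw [hm]
    have hcK : (algebraMap F K e - algebraMap F K p) * (algebraMap F K e - algebraMap F K q) =
        algebraMap F K c * algebraMap F K c := by
      rw [← map_sub, ← map_sub, ← map_mul, hc, map_mul]
    have hx' : (x - algebraMap F K (e + c)) * (x - algebraMap F K (e - c)) = 0 := by
      rw [map_add, map_sub]; linear_combination hx + hcK
    rcases mul_eq_zero.1 hx' with hx' | hx'
    · obtain rfl := sub_eq_zero.1 hx'
      convert isSquare_mul_of_addOrderOf_eq_four_of_X_eq_algebraMap hK h2 hD hDK hW h4 h hP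
        using 2 <;> ring
    · obtain rfl := sub_eq_zero.1 hx'
      obtain ⟨hm', hsq'⟩ :=
        isSquare_mul_of_addOrderOf_eq_four_of_X_eq_algebraMap hK h2 hD hDK hW h4 h hP
      set m' := (e - c - e) * (e - c - p) * (e - c - q)
      have hprod : c * (e + c - p) * (e + c - q) * m' = ((e - p) * (e - q) * (p - q)) ^ 2 := by
        rw [show c * (e + c - p) * (e + c - q) * m' =
          -(c * c) * ((e - p) ^ 2 - c * c) * ((e - q) ^ 2 - c * c) by ring, ← hc]
        ring
      refine ⟨left_ne_zero_of_mul (hprod ▸ pow_ne_zero 2 (mul_ne_zero hd (sub_ne_zero.2 hpq))), ?_⟩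
      rw [show D * (c * (e + c - p) * (e + c - q)) =
          D * m' * ((e - p) * (e - q) * (p - q) / m') ^ 2 by rw [div_pow, ← hprod]; field_simp]
      exact hsq'.mul (.sq _)
  · rw [halvingClass, dif_neg hsq]
    refine ⟨hd, isSquare_mul_of_isSquare_algebraMap hK h2 hD hsq hDK ⟨x - algebraMap F K e, ?_⟩⟩
    rw [map_mul, map_sub, map_sub, ← hx, sq]

lemma isSquare_mul_halvingClass_of_addOrderOf_eq_four (hep : e ≠ p) (heq : e ≠ q) (hpq : p ≠ q)
    {P : (W⁄K).Point} (hP : addOrderOf P = 4) :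
    (halvingClass e p q ≠ 0 ∧ IsSquare (D * halvingClass e p q)) ∨
      (halvingClass p q e ≠ 0 ∧ IsSquare (D * halvingClass p q e)) ∨
      (halvingClass q e p ≠ 0 ∧ IsSquare (D * halvingClass q e p)) := by
  have h2K : (2 : K) ≠ 0 := by rw [← map_ofNat (algebraMap F K) 2]; exact (map_ne_zero _).2 h2
  obtain ⟨x, y, h, rfl, hx⟩ := Point.exists_sq_sub_eq_of_addOrderOf_eq_four
    (W := W.baseChange K) h2K (by rw [hW, baseChange_ofRoots]) hP
  have hWp := hW.trans (ofRoots_rotate e p q)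
  have hWq := hWp.trans (ofRoots_rotate p q e)
  rcases hx with hx | hx | hx
  · exact .inl <| isSquare_mul_halvingClass hK h2 hD hDK hW h4 hep heq hpq h hP hx
  · exact .inr <| .inl <| isSquare_mul_halvingClass hK h2 hD hDK hWp (hWp ▸ h4) hpq hep.symm
      (Ne.symm heq) h hP hx
  · exact .inr <| .inr <| isSquare_mul_halvingClass hK h2 hD hDK hWq (hWq ▸ h4) (Ne.symm heq)
      (Ne.symm hpq) hep h hP hx

end HalvingClass

open scoped Classical in
/-- The squarefree `D` with `D m` a square (unique for `m ≠ 0`; junk `0` if there is none). -/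
noncomputable def squarefreeRep (m : ℚ) : ℤ :=
  if h : ∃ D : ℤ, Squarefree D ∧ IsSquare ((D : ℚ) * m) then h.choose else 0

lemma squarefreeRep_eq {m : ℚ} (hm : m ≠ 0) {D : ℤ} (hD : Squarefree D)
    (hDm : IsSquare ((D : ℚ) * m)) : squarefreeRep m = D := by
  have hex : ∃ D : ℤ, Squarefree D ∧ IsSquare ((D : ℚ) * m) := ⟨D, hD, hDm⟩
  rw [squarefreeRep, dif_pos hex]
  obtain ⟨hD', hD'm⟩ := hex.choose_spec
  generalize hex.choose = D' at hD' hD'm ⊢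
  refine Int.eq_of_squarefree_of_isSquare_mul hD' hD (Rat.isSquare_intCast_iff.1 ?_)
  rw [show ((D' * D : ℤ) : ℚ) = D' * m * (D * m) / m ^ 2 by push_cast; field_simp]
  exact (hD'm.mul hDm).div (.sq m)

open Polynomial in
lemma AdjoinRoot.finrank_X_pow_sub_C {F : Type*} [Field F] {n : ℕ} (hn : n ≠ 0) (a : F) :
    finrank F (AdjoinRoot (X ^ n - C a)) = n := by
  rw [(AdjoinRoot.powerBasis' (monic_X_pow_sub_C a hn)).finrank, AdjoinRoot.powerBasis'_dim,
    natDegree_X_pow_sub_C]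

/-- Let `E : Y² = X(X - A)(X - B)` with `0, A, B` pairwise distinct, and suppose `E(ℚ)`
has no point of order `4`.  Then there are at most three squarefree integers `D ∉ {0, 1}`
such that `E(ℚ(√D))` contains a subgroup isomorphic to `C₂ × C₄`. -/
theorem at_most_three_C2xC4_growth (A B : ℚ) (hA : A ≠ 0) (hB : B ≠ 0) (hAB : A ≠ B)
    (E : WeierstrassCurve ℚ) (hE : E = ⟨0, -(A + B), 0, A * B, 0⟩)
    (h4 : ∀ P : E.toAffine.Point, addOrderOf P ≠ 4) :
    ∃ s : Finset ℤ, s.card ≤ 3 ∧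
      ∀ D : ℤ, Squarefree D → D ≠ 0 → D ≠ 1 →
        (∀ (K : Type) [Field K] [Algebra ℚ K], Module.finrank ℚ K = 2 →
          (∃ x : K, x ^ 2 = (D : K)) →
          haveI : DecidableEq K := Classical.decEq K
          ∃ f : (ZMod 2 × ZMod 4) →+ WeierstrassCurve.Affine.Point (WeierstrassCurve.Affine.baseChange E K), Function.Injective f) →
        D ∈ s := by
  have hE' : E = ofRoots 0 A B := by
    rw [hE]; ext <;> simp [ofRoots]
  refine ⟨{squarefreeRep (halvingClass 0 A B), squarefreeRep (halvingClass A B 0),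
    squarefreeRep (halvingClass B 0 A)}, Finset.card_le_three, ?_⟩
  intro D hD _ hD1 hgrowth
  have hDQ : ¬IsSquare (D : ℚ) := Int.not_isSquare_intCast_of_squarefree hD hD1
  let g : Polynomial ℚ := .X ^ 2 - .C (D : ℚ)
  have : Fact (Irreducible g) :=
    ⟨X_pow_sub_C_irreducible_of_prime Nat.prime_two fun b hb ↦ hDQ ⟨b, by rw [← hb, sq]⟩⟩
  let K := AdjoinRoot g
  have hK : finrank ℚ K = 2 := AdjoinRoot.finrank_X_pow_sub_C two_ne_zero _
  have hDK : AdjoinRoot.root g ^ 2 = algebraMap ℚ K D := root_X_pow_sub_C_pow 2 _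
  let _ : DecidableEq K := Classical.decEq K
  obtain ⟨f, hf⟩ := hgrowth K hK ⟨_, by rw [hDK, map_intCast]⟩
  have hP : addOrderOf (f (0, 1)) = 4 := by
    rw [addOrderOf_injective f hf, Prod.addOrderOf, addOrderOf_zero, ZMod.addOrderOf_one]
    rfl
  rcases isSquare_mul_halvingClass_of_addOrderOf_eq_four hK two_ne_zero hDQ ⟨_, hDK ▸ sq _⟩ hE' h4
    hA.symm hB.symm hAB hP with ⟨hm, hDm⟩ | ⟨hm, hDm⟩ | ⟨hm, hDm⟩ <;>
    simp [← squarefreeRep_eq hm hD hDm]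
end

section
/- Let F be a field of characteristic zero and let A, B, y₀ ∈ F be such that the Weierstrass curve E : Y² = X³ + AX² + BX + y₀² has nonzero discriminant, and let P = (0, y₀) ∈ E(F). Let L be a field extension of F and α ∈ L a root of the quartic polynomial q(x) = x⁴ − 2Ax² − 8y₀x + A² − 4B. Then the point Q = ((α² − A)/2, α(α² − A)/2 − y₀) lies on E(L) and satisfies 2Q = P (where 2Q denotes Q + Q in the group E(L)). -/
/-!
Write `x = (α² - a)/2`, so that `α² = a + 2x`; given this, the quartic condition on `α` reads
`x² = b + 2cα`. These two relations say that the line `Y = αX - c` is tangent to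
`E : Y² = X³ + aX² + bX + c²` at `Q = (x, αx - c)`. Its third intersection with `E` is then
`(0, -c) = -P`, whence `2Q = P`. The discriminant being nonzero rules out both characteristic `2`
(for these curves `16 ∣ Δ`) and `Q` being `2`-torsion.
-/
open WeierstrassCurve WeierstrassCurve.Affine

namespace WeierstrassCurve

lemma baseChange_mk {R : Type*} [CommRing R] (A : Type*) [CommRing A] [Algebra R A]
    (a₁ a₂ a₃ a₄ a₆ : R) : (mk a₁ a₂ a₃ a₄ a₆).baseChange A =
      mk (algebraMap R A a₁) (algebraMap R A a₂) (algebraMap R A a₃) (algebraMap R A a₄)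
        (algebraMap R A a₆) :=
  rfl

section

variable {R : Type*} [CommRing R]

lemma Δ_mk_zero_zero (a b d : R) :
    (mk 0 a 0 b d).Δ = 16 * (a ^ 2 * b ^ 2 - 4 * a ^ 3 * d - 4 * b ^ 3 + 18 * a * b * d
      - 27 * d ^ 2) := by
  simp only [Δ, b₂, b₄, b₆, b₈]
  ring

lemma two_ne_zero_of_Δ_mk_zero_zero_ne_zero {a b d : R} (hΔ : (mk 0 a 0 b d).Δ ≠ 0) :
    (2 : R) ≠ 0 := by
  rintro h2
  apply hΔ
  rw [Δ_mk_zero_zero, show (16 : R) = 2 ^ 4 by norm_num, h2]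
  ring

end

variable {K : Type*} [Field K] {a b c x α : K}

/-- The cubic `X³ + aX² + bX + c²` is then `(X - x)²(X + α²)`. -/
lemma Δ_mk_zero_zero_eq_zero_of_mul_eq (ha : α ^ 2 = a + 2 * x) (hb : x ^ 2 = b + 2 * c * α)
    (hc : α * x = c) : (mk 0 a 0 b (c ^ 2)).Δ = 0 := by
  obtain rfl : a = α ^ 2 - 2 * x := by linear_combination -ha
  obtain rfl : b = x ^ 2 - 2 * c * α := by linear_combination -hb
  subst hc
  rw [Δ_mk_zero_zero]
  ring

lemma equation_mk_zero_zero (ha : α ^ 2 = a + 2 * x) (hb : x ^ 2 = b + 2 * c * α) :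
    (mk 0 a 0 b (c ^ 2)).toAffine.Equation x (α * x - c) := by
  rw [equation_iff]
  linear_combination x ^ 2 * ha + x * hb

variable [DecidableEq K]

lemma slope_mk_zero_zero (ha : α ^ 2 = a + 2 * x) (hb : x ^ 2 = b + 2 * c * α)
    (hy : α * x - c ≠ (mk 0 a 0 b (c ^ 2)).toAffine.negY x (α * x - c)) :
    (mk 0 a 0 b (c ^ 2)).toAffine.slope x x (α * x - c) (α * x - c) = α := by
  rw [slope_of_Y_ne rfl hy, div_eq_iff (sub_ne_zero.mpr hy)]
  simp only [negY]
  linear_combination -2 * x * ha - hb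

theorem exists_two_nsmul_eq_mk_zero_zero (hΔ : (mk 0 a 0 b (c ^ 2)).Δ ≠ 0)
    (ha : α ^ 2 = a + 2 * x) (hb : x ^ 2 = b + 2 * c * α) :
    ∃ (hP : (mk 0 a 0 b (c ^ 2)).toAffine.Nonsingular 0 c)
      (hQ : (mk 0 a 0 b (c ^ 2)).toAffine.Nonsingular x (α * x - c)),
      2 • Point.some _ _ hQ = Point.some _ _ hP := by
  have hP : (mk 0 a 0 b (c ^ 2)).toAffine.Nonsingular 0 c :=
    (equation_iff_nonsingular_of_Δ_ne_zero hΔ).mp (by rw [equation_iff]; ring)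
  have hQ := (equation_iff_nonsingular_of_Δ_ne_zero hΔ).mp (equation_mk_zero_zero ha hb)
  have hy : α * x - c ≠ (mk 0 a 0 b (c ^ 2)).toAffine.negY x (α * x - c) := by
    have h2 := two_ne_zero_of_Δ_mk_zero_zero_ne_zero hΔ
    have hy0 : α * x - c ≠ 0 := fun h =>
      hΔ (Δ_mk_zero_zero_eq_zero_of_mul_eq ha hb (sub_eq_zero.mp h))
    simp only [negY]
    intro h
    exact mul_ne_zero h2 hy0 (by linear_combination h)
  refine ⟨hP, hQ, ?_⟩
  rw [two_nsmul, Point.add_self_of_Y_ne hy, Point.some.injEq]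
  simp only [addX, addY, negY, negAddY, slope_mk_zero_zero ha hb hy]
  exact ⟨by linear_combination ha, by linear_combination -α * ha⟩

theorem exists_two_nsmul_eq_mk_zero_zero_of_quartic (hΔ : (mk 0 a 0 b (c ^ 2)).Δ ≠ 0)
    (hα : α ^ 4 - 2 * a * α ^ 2 - 8 * c * α + a ^ 2 - 4 * b = 0) :
    ∃ (hP : (mk 0 a 0 b (c ^ 2)).toAffine.Nonsingular 0 c)
      (hQ : (mk 0 a 0 b (c ^ 2)).toAffine.Nonsingular ((α ^ 2 - a) / 2)
        (α * ((α ^ 2 - a) / 2) - c)),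
      2 • Point.some _ _ hQ = Point.some _ _ hP := by
  have h2 := two_ne_zero_of_Δ_mk_zero_zero_ne_zero hΔ
  refine exists_two_nsmul_eq_mk_zero_zero hΔ ?_ ?_
  · field_simp
    ring
  · field_simp
    linear_combination hα

end WeierstrassCurve

open Classical in
theorem halving_point_general (F : Type) [Field F] (A B y₀ : F)
    (E : WeierstrassCurve F) (hE : E = ⟨0, A, 0, B, y₀ ^ 2⟩) (hΔ : E.Δ ≠ 0)
    (L : Type) [Field L] [Algebra F L] (α : L)
    (hα : α ^ 4 - 2 * algebraMap F L A * α ^ 2 - 8 * algebraMap F L y₀ * α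
        + algebraMap F L A ^ 2 - 4 * algebraMap F L B = 0) :
    ∃ (hP : (E.baseChange L).toAffine.Nonsingular 0 (algebraMap F L y₀))
      (hQ : (E.baseChange L).toAffine.Nonsingular ((α ^ 2 - algebraMap F L A) / 2)
        (α * ((α ^ 2 - algebraMap F L A) / 2) - algebraMap F L y₀)),
      2 • (Point.some _ _ hQ : (E.baseChange L).toAffine.Point) = Point.some _ _ hP := by
  have hΔL : (E.baseChange L).Δ ≠ 0 := by
    rw [WeierstrassCurve.baseChange, map_Δ]
    exact (map_ne_zero _).mpr hΔ
  subst hE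
  rw [baseChange_mk, map_zero, map_pow] at hΔL ⊢
  exact exists_two_nsmul_eq_mk_zero_zero_of_quartic hΔL (by linear_combination hα)

open Classical in
/-- Halving a point: let `E : Y² = X³ + AX² + BX + y₀²` be an elliptic curve over a field
`F` of characteristic zero, with the point `P = (0, y₀)`.  If `α` is a root (in a field
extension `L` of `F`) of `q(x) = x⁴ - 2Ax² - 8y₀x + A² - 4B`, then
`Q = ((α² - A)/2, α(α² - A)/2 - y₀)` lies on `E(L)` and satisfies `2Q = P`. -/
theorem halving_point (F : Type) [Field F] [CharZero F] (A B y₀ : F)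
    (E : WeierstrassCurve F) (hE : E = ⟨0, A, 0, B, y₀ ^ 2⟩) (hΔ : E.Δ ≠ 0)
    (L : Type) [Field L] [Algebra F L] (α : L)
    (hα : α ^ 4 - 2 * algebraMap F L A * α ^ 2 - 8 * algebraMap F L y₀ * α
        + algebraMap F L A ^ 2 - 4 * algebraMap F L B = 0) :
    ∃ (hP : (E.baseChange L).toAffine.Nonsingular 0 (algebraMap F L y₀))
      (hQ : (E.baseChange L).toAffine.Nonsingular ((α ^ 2 - algebraMap F L A) / 2)
        (α * ((α ^ 2 - algebraMap F L A) / 2) - algebraMap F L y₀)),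
      2 • (Point.some _ _ hQ : (E.baseChange L).toAffine.Point) = Point.some _ _ hP :=
  halving_point_general F A B y₀ E hE hΔ L α hα
end

section
/- Let A, B ∈ ℚ and let E : Y² = X(X² + AX + B) be an elliptic curve over ℚ (nonzero discriminant) with E(ℚ)_tors isomorphic to the cyclic group C₂. Then: (i) there exists a quadratic field K (a number field with [K:ℚ] = 2) such that E(K) contains a point of order 4 if and only if B = s² for some s ∈ ℚ; and (ii) in that situation, the quadratic fields K over which E(K) contains a point of order 4 are exactly K₊ = ℚ(√(A + 2s)) and K₋ = ℚ(√(A − 2s)), and moreover K₊ ≠ K₋ (equivalently, (A+2s)(A−2s) is not a square in ℚ). -/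
open WeierstrassCurve WeierstrassCurve.Affine Polynomial

/-!
On `E : y² = x(x² + Ax + B)` the doubling formula shows that `2P = (0, 0)` forces `x(P)² = B` and
`(y(P)/x(P))² = A + 2x(P)`; conversely, if `t² = B` and `q² = A + 2t`, then `P = (t, tq)` has
tangent slope `q`, so `2P = (0, 0)` and `P` has order 4. As `E(ℚ)_tors ≅ C₂`, there is neither a
rational point of order 4 nor a second rational 2-torsion point, so neither `A ± 2s` nor
`A² - 4B` is a rational square.

Over a quadratic field `K`, a point `P` of order 4 has `2P = (x₀, 0)`. If `x₀ ≠ 0`, then `x₀ ∉ ℚ`,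
and for the conjugation `σ` of `K` the three 2-torsion points sum to zero, giving
`2(P + σP) = (x₀, 0) + (σx₀, 0) = (0, 0)`. So `(0, 0)` is halved over `K`, giving `x² = B` and
`w² = A + 2x` in `K`. If `B` were not a rational square, writing `w = u + vx` would give `uv = 1`
and `u² + v²B = A`, whence `(2u² - A)² = A² - 4B`. Hence `B = s²`, `x = ±s`, and `A ± 2s` is a
square in `K`.
-/

section TorsionZModTwo

variable {G : Type*} [AddCommGroup G]

lemma addOrderOf_ne_four_of_torsion_equiv_zmod_two
    (htors : Nonempty (AddCommGroup.torsion G ≃+ ZMod 2)) (P : G) : addOrderOf P ≠ 4 := by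
  obtain ⟨e⟩ := htors
  intro hP
  have hfin : P ∈ AddCommGroup.torsion G := by
    rw [AddCommGroup.mem_torsion, ← addOrderOf_pos_iff, hP]; norm_num
  have h := addOrderOf_dvd_card (x := e ⟨P, hfin⟩)
  rw [AddEquiv.addOrderOf_eq, AddSubgroup.addOrderOf_mk, hP, ZMod.card] at h
  norm_num at h

lemma eq_of_mem_torsion_of_torsion_equiv_zmod_two
    (htors : Nonempty (AddCommGroup.torsion G ≃+ ZMod 2)) {P Q : G}
    (hP : P ∈ AddCommGroup.torsion G) (hQ : Q ∈ AddCommGroup.torsion G)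
    (hP0 : P ≠ 0) (hQ0 : Q ≠ 0) : P = Q := by
  obtain ⟨e⟩ := htors
  have key : ∀ a b : ZMod 2, a ≠ 0 → b ≠ 0 → a = b := by decide
  have h := key (e ⟨P, hP⟩) (e ⟨Q, hQ⟩) (by simpa [Subtype.ext_iff] using hP0)
    (by simpa [Subtype.ext_iff] using hQ0)
  exact congrArg Subtype.val (e.injective h)

end TorsionZModTwo

section CharNeTwoNF

variable {F : Type*} [Field F] {W : WeierstrassCurve F} [W.IsCharNeTwoNF]

lemma Δ_of_isCharNeTwoNF_of_a₆_eq_zero (h₆ : W.a₆ = 0) :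
    W.Δ = 16 * W.a₄ ^ 2 * (W.a₂ ^ 2 - 4 * W.a₄) := by
  rw [Δ_of_isCharNeTwoNF, h₆]; ring

lemma equation_iff_of_a₆_eq_zero (h₆ : W.a₆ = 0) {x y : F} :
    W.toAffine.Equation x y ↔ y ^ 2 = x * (x ^ 2 + W.a₂ * x + W.a₄) := by
  rw [Affine.equation_iff, a₁_of_isCharNeTwoNF, a₃_of_isCharNeTwoNF, h₆]
  constructor <;> intro h <;> linear_combination h

lemma negY_of_isCharNeTwoNF (x y : F) : W.toAffine.negY x y = -y := by
  simp [Affine.negY, a₁_of_isCharNeTwoNF, a₃_of_isCharNeTwoNF]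

namespace WeierstrassCurve.Affine.Point

variable [DecidableEq F]

lemma some_add_self_of_Y_eq_zero {x : F} (h : W.toAffine.Nonsingular x 0) :
    some x 0 h + some x 0 h = 0 :=
  add_self_of_Y_eq (by simp)

lemma some_mem_torsion_of_Y_eq_zero {x : F} (h : W.toAffine.Nonsingular x 0) :
    some x 0 h ∈ AddCommGroup.torsion W.toAffine.Point :=
  isOfFinAddOrder_iff_nsmul_eq_zero.mpr ⟨2, two_pos, by rw [two_nsmul, some_add_self_of_Y_eq_zero]⟩

lemma exists_some_add_some_eq_of_Y_eq_zero {x₁ x₂ x₃ y₁ y₂ : F}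
    {h₁ : W.toAffine.Nonsingular x₁ y₁} {h₂ : W.toAffine.Nonsingular x₂ y₂} (hy₁ : y₁ = 0)
    (hy₂ : y₂ = 0) (hx : x₁ ≠ x₂) (hx₃ : x₁ + x₂ + x₃ = -W.a₂) :
    ∃ h₃ : W.toAffine.Nonsingular x₃ 0, some x₁ y₁ h₁ + some x₂ y₂ h₂ = some x₃ 0 h₃ := by
  have hℓ : W.toAffine.slope x₁ x₂ y₁ y₂ = 0 := by
    rw [slope_of_X_ne hx, hy₁, hy₂, sub_zero, zero_div]
  have hX : W.toAffine.addX x₁ x₂ (W.toAffine.slope x₁ x₂ y₁ y₂) = x₃ := by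
    rw [hℓ, Affine.addX, a₁_of_isCharNeTwoNF]
    linear_combination -hx₃
  have hY : W.toAffine.addY x₁ x₂ y₁ (W.toAffine.slope x₁ x₂ y₁ y₂) = 0 := by
    rw [hℓ, Affine.addY, negY_of_isCharNeTwoNF, Affine.negAddY, hy₁]
    ring
  refine ⟨hX ▸ hY ▸ nonsingular_add h₁ h₂ fun h => hx h.1, ?_⟩
  rw [add_of_X_ne hx, some.injEq]
  exact ⟨hX, hY⟩

lemma exists_two_nsmul_some_eq [NeZero (2 : F)] {x y X : F} (h : W.toAffine.Nonsingular x y)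
    (hy : y ≠ 0) (hX : ((3 * x ^ 2 + 2 * W.a₂ * x + W.a₄) / (2 * y)) ^ 2 - W.a₂ - 2 * x = X) :
    ∃ Y h', 2 • some x y h = some X Y h' := by
  have hy' : y ≠ W.toAffine.negY x y := by
    rw [negY_of_isCharNeTwoNF]
    intro hy'
    exact hy ((mul_eq_zero.mp (by linear_combination hy' : (2 : F) * y = 0)).resolve_left
      two_ne_zero)
  have hX' : W.toAffine.addX x x (W.toAffine.slope x x y y) = X := by
    rw [← hX, slope_of_Y_ne rfl hy', negY_of_isCharNeTwoNF, Affine.addX, a₁_of_isCharNeTwoNF]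
    ring
  refine ⟨_, hX' ▸ nonsingular_add h h fun hxy => hy' hxy.2, ?_⟩
  rw [two_nsmul, add_self_of_Y_ne hy', some.injEq]
  exact ⟨hX', rfl⟩

lemma Y_eq_zero_of_two_nsmul_eq_zero [NeZero (2 : F)] {x y : F} {h : W.toAffine.Nonsingular x y}
    (h2 : 2 • some x y h = 0) : y = 0 := by
  by_contra hy
  obtain ⟨_, _, h2'⟩ := exists_two_nsmul_some_eq h hy rfl
  exact some_ne_zero _ (h2'.symm.trans h2)

lemma exists_two_nsmul_eq_some_of_addOrderOf_eq_four [NeZero (2 : F)] {P : W.toAffine.Point}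
    (hP : addOrderOf P = 4) : ∃ x₀ h₀, 2 • P = some x₀ 0 h₀ := by
  have h2P : 2 • P ≠ 0 := fun h => by
    have := addOrderOf_dvd_of_nsmul_eq_zero h
    rw [hP] at this
    norm_num at this
  have h4P : 2 • 2 • P = 0 := by
    rw [smul_smul, show 2 * 2 = addOrderOf P by rw [hP]]
    exact addOrderOf_nsmul_eq_zero P
  rcases h : 2 • P with _ | ⟨x₀, y₀, h₀⟩
  · exact absurd h h2P
  · rw [h] at h4P
    obtain rfl := Y_eq_zero_of_two_nsmul_eq_zero h4P
    exact ⟨x₀, h₀, rfl⟩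

lemma exists_sq_eq_of_two_nsmul_eq_some_zero [NeZero (2 : F)] (h₆ : W.a₆ = 0)
    {P : W.toAffine.Point} {y₀ : F} {h₀ : W.toAffine.Nonsingular 0 y₀}
    (hP : 2 • P = some 0 y₀ h₀) : ∃ x w : F, x ^ 2 = W.a₄ ∧ w ^ 2 = W.a₂ + 2 * x := by
  rcases P with _ | ⟨x, y, h⟩
  · exact absurd (hP.symm.trans (smul_zero 2)) (some_ne_zero _)
  have hy : y ≠ 0 := by
    rintro rfl
    rw [two_nsmul, some_add_self_of_Y_eq_zero] at hP
    exact some_ne_zero _ hP.symm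
  obtain ⟨Y, h', h2⟩ := exists_two_nsmul_some_eq h hy rfl
  have hX := ((some.injEq ..).mp (h2.symm.trans hP)).1
  have heq := (equation_iff_of_a₆_eq_zero h₆).mp h.1
  have hx : x ≠ 0 := by
    rintro rfl
    exact hy (pow_eq_zero_iff two_ne_zero |>.mp (by simpa using heq))
  have hsq : x ^ 2 = W.a₄ := by
    field_simp at hX
    have : (x ^ 2 - W.a₄) ^ 2 = 0 := by linear_combination hX + 4 * (W.a₂ + 2 * x) * heq
    exact sub_eq_zero.mp (pow_eq_zero_iff two_ne_zero |>.mp this)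
  refine ⟨x, y / x, hsq, ?_⟩
  field_simp
  linear_combination heq - x * hsq

lemma exists_addOrderOf_eq_four_of_sq_eq [NeZero (2 : F)] (h₆ : W.a₆ = 0) (hΔ : W.Δ ≠ 0) {t q : F}
    (ht : t ^ 2 = W.a₄) (hq : q ^ 2 = W.a₂ + 2 * t) : ∃ P : W.toAffine.Point, addOrderOf P = 4 := by
  have hΔ' := Δ_of_isCharNeTwoNF_of_a₆_eq_zero h₆ ▸ hΔ
  have ht0 : t ≠ 0 := by rintro rfl; apply hΔ'; rw [← ht]; ring
  have hq0 : q ≠ 0 := by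
    rintro rfl
    apply hΔ'
    rw [← ht]
    linear_combination (-16 * t ^ 4 * (W.a₂ - 2 * t)) * hq
  have h : W.toAffine.Nonsingular t (t * q) :=
    (equation_iff_nonsingular_of_Δ_ne_zero hΔ).mp <| (equation_iff_of_a₆_eq_zero h₆).mpr <| by
      linear_combination t ^ 2 * hq + t * ht
  obtain ⟨Y, h₀, h2⟩ := exists_two_nsmul_some_eq h (mul_ne_zero ht0 hq0) (X := 0) <| by
    have hslope : (3 * t ^ 2 + 2 * W.a₂ * t + W.a₄) / (2 * (t * q)) = q := by
      rw [div_eq_iff (mul_ne_zero two_ne_zero (mul_ne_zero ht0 hq0))]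
      linear_combination (-2 * t) * hq - ht
    rw [hslope]
    linear_combination hq
  have hY : Y = 0 := by
    have := (equation_iff_of_a₆_eq_zero h₆).mp h₀.1
    exact pow_eq_zero_iff two_ne_zero |>.mp (by simpa using this)
  subst hY
  refine ⟨some t (t * q) h, addOrderOf_eq_prime_pow (p := 2) (n := 1) ?_ ?_⟩
  · rw [pow_one, h2]
    exact some_ne_zero _
  · rw [pow_succ, pow_one, mul_nsmul, h2, two_nsmul, some_add_self_of_Y_eq_zero]

end WeierstrassCurve.Affine.Point

lemma not_isSquare_a₂_sq_sub_four_mul_a₄ [NeZero (2 : F)] [DecidableEq F] (h₆ : W.a₆ = 0)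
    (hΔ : W.Δ ≠ 0) (htors : Nonempty (AddCommGroup.torsion W.toAffine.Point ≃+ ZMod 2)) :
    ¬IsSquare (W.a₂ ^ 2 - 4 * W.a₄) := by
  rintro ⟨d, hd⟩
  have hΔ' := Δ_of_isCharNeTwoNF_of_a₆_eq_zero h₆ ▸ hΔ
  obtain ⟨r, hr⟩ : ∃ r : F, r ^ 2 + W.a₂ * r + W.a₄ = 0 :=
    ⟨(d - W.a₂) / 2, by field_simp; linear_combination -hd⟩
  have hr0 : r ≠ 0 := by
    rintro rfl
    apply hΔ'
    rw [show W.a₄ = 0 by linear_combination hr]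
    ring
  have hT : ∀ x : F, x * (x ^ 2 + W.a₂ * x + W.a₄) = 0 → ∃ h : W.toAffine.Nonsingular x 0,
      Point.some x 0 h ∈ AddCommGroup.torsion W.toAffine.Point ∧ Point.some x 0 h ≠ 0 :=
    fun x hx =>
      have h := (equation_iff_nonsingular_of_Δ_ne_zero hΔ).mp <|
        (equation_iff_of_a₆_eq_zero h₆).mpr (by linear_combination -hx)
      ⟨h, Point.some_mem_torsion_of_Y_eq_zero h, Point.some_ne_zero h⟩
  obtain ⟨_, hT0, hT0'⟩ := hT 0 (by ring)
  obtain ⟨_, hTr, hTr'⟩ := hT r (by rw [hr, mul_zero])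
  have := eq_of_mem_torsion_of_torsion_equiv_zmod_two htors hT0 hTr hT0' hTr'
  exact hr0 ((Point.some.injEq ..).mp this).1.symm

end CharNeTwoNF

section QuadraticExtension

variable {F K : Type*} [Field F] [Field K] [Algebra F K]

lemma exists_algEquiv_apply_eq_neg_sub [CharZero F] (hK : Module.finrank F K = 2) {a b : F}
    {x : K} (hx : x ^ 2 + algebraMap F K a * x + algebraMap F K b = 0)
    (hxF : x ∉ Set.range (algebraMap F K)) : ∃ σ : K ≃ₐ[F] K, σ x = -algebraMap F K a - x := by
  have : Algebra.IsQuadraticExtension F K := ⟨hK⟩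
  have : FiniteDimensional F K := Module.finite_of_finrank_eq_succ hK
  obtain ⟨σ, hσ⟩ : ∃ σ : K ≃ₐ[F] K, σ x ≠ x := by
    by_contra! h
    exact hxF ((IsGalois.mem_range_algebraMap_iff_fixed x).mpr h)
  have hσx : σ x ^ 2 + algebraMap F K a * σ x + algebraMap F K b = 0 := by
    simpa using congrArg σ hx
  have : (σ x - x) * (σ x + x + algebraMap F K a) = 0 := by linear_combination hσx - hx
  exact ⟨σ, by linear_combination (mul_eq_zero.mp this).resolve_left (sub_ne_zero.mpr hσ)⟩

lemma isSquare_of_sq_eq_of_sq_eq_add [NeZero (2 : F)] (hK : Module.finrank F K = 2) {a b : F}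
    (hdisc : ¬IsSquare (a ^ 2 - 4 * b)) {x w : K} (hx : x ^ 2 = algebraMap F K b)
    (hw : w ^ 2 = algebraMap F K a + 2 * x) : IsSquare b := by
  by_contra hb
  have hxF : ∀ r : F, algebraMap F K r ≠ x := by
    rintro r rfl
    exact hb ⟨r, (algebraMap F K).injective (by rw [← hx]; simp [sq])⟩
  have hli : LinearIndependent F ![1, x] := by
    refine LinearIndependent.pair_iff.mpr fun s t hst => ?_
    by_cases ht : t = 0
    · subst ht
      simpa using hst
    · refine absurd ?_ (hxF (-s / t))
      rw [Algebra.smul_def, Algebra.smul_def, mul_one] at hst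
      rw [map_div₀, map_neg, div_eq_iff (by simpa using ht)]
      linear_combination -hst
  have : FiniteDimensional F K := Module.finite_of_finrank_eq_succ hK
  have hspan := hli.span_eq_top_of_card_eq_finrank' (by simp [hK])
  have hwspan : w ∈ Submodule.span F (Set.range ![1, x]) := hspan ▸ Submodule.mem_top
  rw [Matrix.range_cons_cons_empty] at hwspan
  obtain ⟨u, v, rfl⟩ := Submodule.mem_span_pair.mp hwspan
  rw [Algebra.smul_def, Algebra.smul_def, mul_one] at hw
  obtain ⟨h1, h2⟩ := LinearIndependent.pair_iff.mp hli (u ^ 2 + v ^ 2 * b - a) (2 * u * v - 2) <| by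
    simp only [Algebra.smul_def, mul_one, map_sub, map_add, map_mul, map_pow, map_ofNat]
    linear_combination hw - (algebraMap F K v) ^ 2 * hx
  have huv : u * v = 1 := by
    have : (2 : F) * (u * v - 1) = 0 := by linear_combination h2
    linear_combination (mul_eq_zero.mp this).resolve_left two_ne_zero
  exact hdisc ⟨2 * u ^ 2 - a, by linear_combination (-4 * u ^ 2) * h1 + (4 * b * (1 + u * v)) * huv⟩

lemma exists_intermediateField_finrank_eq_two {L : Type*} [Field L] [IsAlgClosed L]
    [Algebra F L] {c : F} (hc : ∀ q : F, q ^ 2 ≠ c) :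
    ∃ K : IntermediateField F L, Module.finrank F K = 2 ∧ ∃ x : K, x ^ 2 = algebraMap F K c := by
  obtain ⟨α, hα⟩ := IsAlgClosed.exists_pow_nat_eq (algebraMap F L c) two_pos
  have hmonic : (X ^ 2 - C c).Monic := monic_X_pow_sub_C c two_ne_zero
  have hroot : aeval α (X ^ 2 - C c) = 0 := by simp [hα]
  have hmin : minpoly F α = X ^ 2 - C c := (minpoly.eq_of_irreducible_of_monic
    (X_pow_sub_C_irreducible_of_prime Nat.prime_two hc) hroot hmonic).symm
  refine ⟨IntermediateField.adjoin F {α}, ?_, ⟨α, IntermediateField.mem_adjoin_simple_self F α⟩,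
    Subtype.ext ?_⟩
  · rw [IntermediateField.adjoin.finrank ⟨_, hmonic, hroot⟩, hmin, natDegree_X_pow_sub_C]
  · simpa using hα

end QuadraticExtension

instance WeierstrassCurve.isCharNeTwoNF_baseChange {R A : Type*} [CommRing R] [CommRing A]
    [Algebra R A] (W : WeierstrassCurve R) [W.IsCharNeTwoNF] : (W.baseChange A).IsCharNeTwoNF :=
  ⟨by simp [baseChange, a₁_of_isCharNeTwoNF], by simp [baseChange, a₃_of_isCharNeTwoNF]⟩

section BaseChange

variable {F K : Type*} [Field F] [CharZero F] [Field K] [Algebra F K] [DecidableEq K]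
  {W : WeierstrassCurve F} [W.IsCharNeTwoNF]

lemma exists_two_nsmul_eq_some_zero_zero_of_addOrderOf_eq_four (h₆ : W.a₆ = 0)
    (hK : Module.finrank F K = 2) (hdisc : ¬IsSquare (W.a₂ ^ 2 - 4 * W.a₄))
    {P : (W.baseChange K).toAffine.Point} (hP : addOrderOf P = 4) :
    ∃ (Q : (W.baseChange K).toAffine.Point) (h₀ : (W.baseChange K).toAffine.Nonsingular 0 0),
      2 • Q = Point.some 0 0 h₀ := by
  have : CharZero K := charZero_of_injective_algebraMap (algebraMap F K).injective
  obtain ⟨x₀, h₀, h2P⟩ := Point.exists_two_nsmul_eq_some_of_addOrderOf_eq_four hP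
  by_cases hx₀ : x₀ = 0
  · subst hx₀
    exact ⟨P, h₀, h2P⟩
  have hroot : x₀ ^ 2 + algebraMap F K W.a₂ * x₀ + algebraMap F K W.a₄ = 0 := by
    have heq := (equation_iff_of_a₆_eq_zero (by simp [WeierstrassCurve.baseChange, h₆])).mp h₀.1
    simp only [WeierstrassCurve.baseChange, map_a₂, map_a₄] at heq
    exact (mul_eq_zero.mp (by linear_combination -heq)).resolve_left hx₀
  have hx₀F : x₀ ∉ Set.range (algebraMap F K) := by
    rintro ⟨r, rfl⟩
    refine hdisc ⟨2 * r + W.a₂, (algebraMap F K).injective ?_⟩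
    simp only [map_sub, map_mul, map_pow, map_add, map_ofNat]
    linear_combination (-4) * hroot
  obtain ⟨σ, hσ⟩ := exists_algEquiv_apply_eq_neg_sub hK hroot hx₀F
  have hσx₀ : x₀ ≠ σ x₀ := by
    intro h
    refine hx₀F ⟨-W.a₂ / 2, ?_⟩
    rw [map_div₀, map_neg, map_ofNat, div_eq_iff two_ne_zero]
    linear_combination -h - hσ
  obtain ⟨h00, hsum⟩ := Point.exists_some_add_some_eq_of_Y_eq_zero (h₁ := h₀) rfl (map_zero σ) hσx₀
    (x₃ := 0) (by rw [hσ]; simp [WeierstrassCurve.baseChange])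
  refine ⟨P + Point.map (W' := W) σ.toAlgHom P, h00, ?_⟩
  rw [smul_add, ← map_nsmul, h2P, Point.map_some]
  exact hsum

lemma exists_sq_eq_of_addOrderOf_eq_four (h₆ : W.a₆ = 0) (hK : Module.finrank F K = 2)
    (hdisc : ¬IsSquare (W.a₂ ^ 2 - 4 * W.a₄)) {P : (W.baseChange K).toAffine.Point}
    (hP : addOrderOf P = 4) :
    ∃ x w : K, x ^ 2 = algebraMap F K W.a₄ ∧ w ^ 2 = algebraMap F K W.a₂ + 2 * x := by
  have : CharZero K := charZero_of_injective_algebraMap (algebraMap F K).injective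
  obtain ⟨Q, h₀, hQ⟩ := exists_two_nsmul_eq_some_zero_zero_of_addOrderOf_eq_four h₆ hK hdisc hP
  exact Point.exists_sq_eq_of_two_nsmul_eq_some_zero (by simp [WeierstrassCurve.baseChange, h₆]) hQ

lemma isSquare_a₄_of_addOrderOf_eq_four (h₆ : W.a₆ = 0) (hK : Module.finrank F K = 2)
    (hdisc : ¬IsSquare (W.a₂ ^ 2 - 4 * W.a₄)) {P : (W.baseChange K).toAffine.Point}
    (hP : addOrderOf P = 4) : IsSquare W.a₄ :=
  let ⟨_, _, hx, hw⟩ := exists_sq_eq_of_addOrderOf_eq_four h₆ hK hdisc hP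
  isSquare_of_sq_eq_of_sq_eq_add hK hdisc hx hw

lemma exists_addOrderOf_eq_four_iff (h₆ : W.a₆ = 0) (hΔ : W.Δ ≠ 0) (hK : Module.finrank F K = 2)
    (hdisc : ¬IsSquare (W.a₂ ^ 2 - 4 * W.a₄)) {s : F} (hs : W.a₄ = s ^ 2) :
    (∃ P : (W.baseChange K).toAffine.Point, addOrderOf P = 4) ↔
      (∃ x : K, x ^ 2 = algebraMap F K (W.a₂ + 2 * s)) ∨
        ∃ x : K, x ^ 2 = algebraMap F K (W.a₂ - 2 * s) := by
  have : CharZero K := charZero_of_injective_algebraMap (algebraMap F K).injective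
  have h₆K : (W.baseChange K).a₆ = 0 := by simp [WeierstrassCurve.baseChange, h₆]
  have hΔK : (W.baseChange K).Δ ≠ 0 := by
    rw [WeierstrassCurve.baseChange, map_Δ]
    exact (_root_.map_ne_zero _).mpr hΔ
  have hsK : algebraMap F K s ^ 2 = algebraMap F K W.a₄ := by rw [hs, map_pow]
  constructor
  · rintro ⟨P, hP⟩
    obtain ⟨x, w, hx, hw⟩ := exists_sq_eq_of_addOrderOf_eq_four h₆ hK hdisc hP
    rcases sq_eq_sq_iff_eq_or_eq_neg.mp (hx.trans hsK.symm) with rfl | rfl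
    · exact .inl ⟨w, by simp [hw, map_ofNat]⟩
    · exact .inr ⟨w, by simp [hw, map_ofNat, sub_eq_add_neg]⟩
  · rintro (⟨q, hq⟩ | ⟨q, hq⟩)
    · exact Point.exists_addOrderOf_eq_four_of_sq_eq h₆K hΔK hsK (by simpa [map_ofNat] using hq)
    · exact Point.exists_addOrderOf_eq_four_of_sq_eq h₆K hΔK (t := -algebraMap F K s)
        (by rwa [neg_sq]) (by simpa [map_ofNat, sub_eq_add_neg] using hq)

end BaseChange

open Classical in
/-- Let `E : Y² = X(X² + AX + B)` be an elliptic curve over `ℚ` with `E(ℚ)_tors ≅ C₂`.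
(i) There exists a quadratic field `K` such that `E(K)` has a point of order `4` iff
`B = s²` for some `s ∈ ℚ`.  (ii) In that case `A + 2s` and `A - 2s` are rational
nonsquares, a quadratic field `K` acquires a point of order `4` exactly when it contains
a square root of `A + 2s` or of `A - 2s` (i.e. `K = ℚ(√(A + 2s))` or `K = ℚ(√(A - 2s))`),
and these two fields are distinct (equivalently `(A + 2s)(A - 2s)` is not a square). -/
theorem order_four_growth_of_C2 (A B : ℚ) (E : WeierstrassCurve ℚ)
    (hE : E = ⟨0, A, 0, B, 0⟩) (hΔ : E.Δ ≠ 0)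
    (htors : Nonempty (AddCommGroup.torsion E.toAffine.Point ≃+ ZMod 2)) :
    ((∃ K : IntermediateField ℚ ℂ, Module.finrank ℚ K = 2 ∧
        ∃ P : (E.baseChange K).toAffine.Point, addOrderOf P = 4) ↔ ∃ s : ℚ, B = s ^ 2) ∧
    ∀ s : ℚ, B = s ^ 2 →
      (¬ ∃ q : ℚ, q ^ 2 = A + 2 * s) ∧
      (¬ ∃ q : ℚ, q ^ 2 = A - 2 * s) ∧
      (¬ ∃ q : ℚ, q ^ 2 = (A + 2 * s) * (A - 2 * s)) ∧
      (∀ (K : Type) [Field K] [Algebra ℚ K], Module.finrank ℚ K = 2 →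
        ((∃ P : (E.baseChange K).toAffine.Point, addOrderOf P = 4) ↔
          ((∃ x : K, x ^ 2 = algebraMap ℚ K (A + 2 * s)) ∨
            (∃ x : K, x ^ 2 = algebraMap ℚ K (A - 2 * s))))) := by
  have : E.IsCharNeTwoNF := by subst hE; exact ⟨rfl, rfl⟩
  have h₆ : E.a₆ = 0 := by rw [hE]
  obtain rfl : E.a₂ = A := by rw [hE]
  obtain rfl : E.a₄ = B := by rw [hE]
  have hdisc := not_isSquare_a₂_sq_sub_four_mul_a₄ h₆ hΔ htors
  have hnsq : ∀ t : ℚ, t ^ 2 = E.a₄ → ∀ q : ℚ, q ^ 2 ≠ E.a₂ + 2 * t := fun t ht q hq =>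
    let ⟨P, hP⟩ := Point.exists_addOrderOf_eq_four_of_sq_eq h₆ hΔ ht hq
    addOrderOf_ne_four_of_torsion_equiv_zmod_two htors P hP
  refine ⟨⟨fun ⟨K, hK, P, hP⟩ => ?_, fun ⟨s, hs⟩ => ?_⟩,
    fun s hs => ⟨fun ⟨q, hq⟩ => ?_, fun ⟨q, hq⟩ => ?_, fun ⟨q, hq⟩ => ?_, fun K _ _ hK => ?_⟩⟩
  · obtain ⟨r, hr⟩ := isSquare_a₄_of_addOrderOf_eq_four h₆ hK hdisc hP
    exact ⟨r, by rw [hr, sq]⟩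
  · obtain ⟨K, hK, x, hx⟩ := exists_intermediateField_finrank_eq_two (L := ℂ) (hnsq s hs.symm)
    exact ⟨K, hK, (exists_addOrderOf_eq_four_iff h₆ hΔ hK hdisc hs).mpr (.inl ⟨x, hx⟩)⟩
  · exact hnsq s hs.symm q hq
  · exact hnsq (-s) (by rw [hs, neg_sq]) q (by rw [hq]; ring)
  · exact hdisc ⟨q, by rw [hs, ← sq, hq]; ring⟩
  · exact exists_addOrderOf_eq_four_iff h₆ hΔ hK hdisc hs
end

section
/- The only rational points on the curve z² = (s² + 2s − 1)(s² − 2s − 1) are the trivial ones: if s, z ∈ ℚ satisfy z² = (s² + 2s − 1)(s² − 2s − 1), then s = 0 (and z = ±1). -/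
/-!
On the curve, `(2s)⁴ + (z(s² + 1))² = (s² - 1)⁴`, because
`(s² - 1)⁴ - (2s)⁴ = (s² + 2s - 1)(s² - 2s - 1)(s² + 1)²`. A point with `s ≠ 0` has `z ≠ 0`
(2 is not a rational square), so after clearing denominators it gives a nontrivial integer
solution of `a⁴ + b² = c⁴`, which Fermat's right triangle theorem rules out. That theorem is proved
by infinite descent on `c⁴`: once `gcd(a, c) = 1`, the primitive Pythagorean triple `(a², b, c²)`
yields a smaller solution directly when `a` is odd, and via a second primitive triple when `a` is
even.
-/

theorem Int.sq_of_isCoprime_of_pos {a b c : ℤ} (hab : IsCoprime a b) (ha : 0 < a)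
    (h : a * b = c ^ 2) : ∃ u, a = u ^ 2 := by
  obtain ⟨u, hu | hu⟩ := Int.sq_of_isCoprime hab h
  · exact ⟨u, hu⟩
  · nlinarith [sq_nonneg u]

theorem Int.odd_of_isCoprime_of_even {a b : ℤ} (hab : IsCoprime a b) (ha : Even a) : Odd b := by
  refine Int.not_even_iff_odd.mp fun hb => ?_
  have h2 := hab.isUnit_of_dvd' ha.two_dvd hb.two_dvd
  norm_num [Int.isUnit_iff] at h2

def FermatRightTriangle (a b c : ℤ) : Prop :=
  a ≠ 0 ∧ b ≠ 0 ∧ a ^ 4 + b ^ 2 = c ^ 4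

namespace FermatRightTriangle

variable {a b c : ℤ}

theorem right_ne_zero (h : FermatRightTriangle a b c) : c ≠ 0 := by
  obtain ⟨ha, -, habc⟩ := h
  rintro rfl
  have : 0 < a ^ 4 := by positivity
  nlinarith [sq_nonneg b]

theorem isCoprime_middle_of_isCoprime_right (h : FermatRightTriangle a b c) (hac : IsCoprime a c) :
    IsCoprime a b := by
  have hab2 : IsCoprime a (c ^ 4 + a * -a ^ 3) := (hac.pow_right).add_mul_left_right _
  rw [show c ^ 4 + a * -a ^ 3 = b ^ 2 by linear_combination -h.2.2] at hab2
  exact (IsCoprime.pow_right_iff two_pos).mp hab2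

theorem exists_smaller_of_not_isCoprime (h : FermatRightTriangle a b c) (hac : ¬IsCoprime a c) :
    ∃ a' b' c', FermatRightTriangle a' b' c' ∧ c' ^ 4 < c ^ 4 := by
  have hc := h.right_ne_zero
  obtain ⟨ha, hb, habc⟩ := h
  obtain ⟨g, hg, ⟨a₁, rfl⟩, ⟨c₁, rfl⟩⟩ : ∃ g : ℤ, 1 < g ∧ g ∣ a ∧ g ∣ c := by
    refine ⟨Int.gcd a c, ?_, Int.gcd_dvd_left a c, Int.gcd_dvd_right a c⟩
    have hpos := Int.gcd_pos_of_ne_zero_left c ha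
    have hne : Int.gcd a c ≠ 1 := fun h => hac (Int.isCoprime_iff_gcd_eq_one.mpr h)
    omega
  obtain ⟨b₁, rfl⟩ : g ^ 2 ∣ b := by
    refine (Int.pow_dvd_pow_iff two_ne_zero).mp ⟨c₁ ^ 4 - a₁ ^ 4, ?_⟩
    linear_combination habc
  have hg4 : 1 < g ^ 4 := one_lt_pow₀ hg (by norm_num)
  have hc₁ : c₁ ≠ 0 := right_ne_zero_of_mul hc
  refine ⟨a₁, b₁, c₁, ⟨?_, ?_, ?_⟩, ?_⟩
  · rintro rfl; simp at ha
  · rintro rfl; simp at hb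
  · exact mul_left_cancel₀ (by positivity : g ^ 4 ≠ 0) (by linear_combination habc)
  · calc c₁ ^ 4 < g ^ 4 * c₁ ^ 4 := lt_mul_left (by positivity) hg4
      _ = (g * c₁) ^ 4 := by ring

theorem exists_smaller_of_odd (h : FermatRightTriangle a b c) (hab : IsCoprime a b)
    (ha : Odd a) : ∃ a' b' c', FermatRightTriangle a' b' c' ∧ c' ^ 4 < c ^ 4 := by
  have hc := h.right_ne_zero
  have hpt : PythagoreanTriple (a ^ 2) b (c ^ 2) := by
    unfold PythagoreanTriple; linear_combination h.2.2
  obtain ⟨m, n, ha2, hb, hc2, -⟩ := hpt.coprime_classification'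
    (Int.isCoprime_iff_gcd_eq_one.mp hab.pow_left) (Int.odd_iff.mp ha.pow) (by positivity)
  have hn : n ≠ 0 := by rintro rfl; exact h.2.1 (by simpa using hb)
  refine ⟨n, a * c, m, ⟨hn, mul_ne_zero h.1 hc, ?_⟩, ?_⟩
  · linear_combination c ^ 2 * ha2 + (m ^ 2 - n ^ 2) * hc2
  · have : 0 < n ^ 4 := by positivity
    calc m ^ 4 < (m ^ 2 + n ^ 2) ^ 2 := by nlinarith [sq_nonneg (m * n)]
      _ = c ^ 4 := by rw [← hc2]; ring

theorem exists_smaller_of_pythagoreanTriple {u v c : ℤ}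
    (h : PythagoreanTriple (v ^ 2) (2 * u ^ 2) c) (hco : Int.gcd (v ^ 2) (2 * u ^ 2) = 1)
    (hv : v ^ 2 % 2 = 1) (hu : u ≠ 0) (hc : 0 < c) :
    ∃ a' b' c', FermatRightTriangle a' b' c' ∧ c' ^ 4 < c ^ 4 := by
  obtain ⟨P, Q, hv2, hu2, rfl, hPQ, -, hP⟩ := h.coprime_classification' hco hv hc
  have hPQu : P * Q = u ^ 2 := mul_left_cancel₀ two_ne_zero (by linear_combination -hu2)
  have hPQ0 : 0 < P * Q := hPQu ▸ by positivity
  have hP0 : 0 < P := lt_of_le_of_ne hP (by rintro rfl; simp at hPQ0)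
  have hQ0 : 0 < Q := pos_of_mul_pos_right hPQ0 hP
  have hcop := Int.isCoprime_iff_gcd_eq_one.mpr hPQ
  obtain ⟨e, rfl⟩ := Int.sq_of_isCoprime_of_pos hcop hP0 hPQu
  obtain ⟨f, rfl⟩ := Int.sq_of_isCoprime_of_pos hcop.symm hQ0 (by rw [mul_comm, hPQu])
  refine ⟨f, v, e, ⟨?_, ?_, by linear_combination hv2⟩, ?_⟩
  · rintro rfl; simp at hQ0
  · rintro rfl; simp at hv
  · calc e ^ 4 < (e ^ 2) ^ 2 + (f ^ 2) ^ 2 := by nlinarith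
      _ ≤ ((e ^ 2) ^ 2 + (f ^ 2) ^ 2) ^ 4 := le_self_pow₀ (by linarith) (by norm_num)

theorem exists_smaller_of_sq_add_sq {m n k c : ℤ} (hmn : IsCoprime m n) (hm : 0 < m)
    (hn : 0 < n) (hk : m * n = 2 * k ^ 2) (hc : 0 < c) (h : m ^ 2 + n ^ 2 = c ^ 2) :
    ∃ a' b' c', FermatRightTriangle a' b' c' ∧ c' ^ 4 < c ^ 4 := by
  wlog hm2 : Even m generalizing m n
  · have hn2 : Even n := (Int.even_mul.mp ⟨k ^ 2, by rw [hk]; ring⟩).resolve_left hm2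
    exact this hmn.symm hn hm (by linear_combination hk) (by linear_combination h) hn2
  obtain ⟨m₀, rfl⟩ := hm2
  have hnm : IsCoprime n (2 * m₀) := by rw [two_mul]; exact hmn.symm
  obtain ⟨u, rfl⟩ := Int.sq_of_isCoprime_of_pos hnm.of_mul_right_right.symm (by omega)
    (c := k) (mul_left_cancel₀ two_ne_zero (by linear_combination hk))
  obtain ⟨v, rfl⟩ := Int.sq_of_isCoprime_of_pos hnm.of_mul_right_right hn
    (c := k) (mul_left_cancel₀ two_ne_zero (by linear_combination hk))
  refine exists_smaller_of_pythagoreanTriple ?_ (Int.isCoprime_iff_gcd_eq_one.mp hnm)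
    (Int.odd_iff.mp (Int.odd_of_isCoprime_of_even hnm.symm (even_two_mul _))) ?_ hc
  · unfold PythagoreanTriple; linear_combination h
  · rintro rfl; simp at hm

theorem exists_smaller_of_even (h : FermatRightTriangle a b c) (hab : IsCoprime a b)
    (ha : Even a) : ∃ a' b' c', FermatRightTriangle a' b' c' ∧ c' ^ 4 < c ^ 4 := by
  have hc := h.right_ne_zero
  have hpt : PythagoreanTriple b (a ^ 2) (c ^ 2) := by
    unfold PythagoreanTriple; linear_combination h.2.2
  obtain ⟨m, n, -, ha2, hc2, hmn, -, hm⟩ := hpt.coprime_classification'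
    (Int.isCoprime_iff_gcd_eq_one.mp hab.symm.pow_right)
    (Int.odd_iff.mp (Int.odd_of_isCoprime_of_even hab ha)) (by positivity)
  obtain ⟨a₀, rfl⟩ := ha
  have ha₀ : a₀ ≠ 0 := by rintro rfl; exact h.1 (by simp)
  have hk : m * n = 2 * a₀ ^ 2 := mul_left_cancel₀ two_ne_zero (by linear_combination -ha2)
  have hmn0 : 0 < m * n := by rw [hk]; positivity
  have hm0 : 0 < m := lt_of_le_of_ne hm (by rintro rfl; simp at hmn0)
  rw [← Even.pow_abs (by decide : Even 4)]
  exact exists_smaller_of_sq_add_sq (Int.isCoprime_iff_gcd_eq_one.mpr hmn) hm0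
    (pos_of_mul_pos_right hmn0 hm) hk (abs_pos.mpr hc) (by rw [sq_abs, hc2])

theorem exists_smaller (h : FermatRightTriangle a b c) :
    ∃ a' b' c', FermatRightTriangle a' b' c' ∧ c' ^ 4 < c ^ 4 := by
  by_cases hac : IsCoprime a c
  · have hab := h.isCoprime_middle_of_isCoprime_right hac
    rcases Int.even_or_odd a with ha | ha
    · exact h.exists_smaller_of_even hab ha
    · exact h.exists_smaller_of_odd hab ha
  · exact h.exists_smaller_of_not_isCoprime hac

end FermatRightTriangle

theorem not_fermatRightTriangle (a b c : ℤ) : ¬FermatRightTriangle a b c := by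
  induction hn : (c ^ 4).natAbs using Nat.strong_induction_on generalizing a b c with
  | _ n ih =>
    intro h
    obtain ⟨a', b', c', h', hlt⟩ := h.exists_smaller
    exact ih _ (hn ▸ Int.natAbs_lt_natAbs_of_nonneg_of_lt (by positivity) hlt) a' b' c' rfl h'

theorem Rat.pow_four_add_sq_ne_pow_four {a b c : ℚ} (ha : a ≠ 0) (hb : b ≠ 0) :
    a ^ 4 + b ^ 2 ≠ c ^ 4 := by
  intro h
  set d : ℚ := a.den * c.den
  have hd : d ≠ 0 := by positivity
  have hA : a * d = ((a.num * c.den : ℤ) : ℚ) := by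
    push_cast; rw [← Rat.mul_den_eq_num]; ring
  have hC : c * d = ((c.num * a.den : ℤ) : ℚ) := by
    push_cast; rw [← Rat.mul_den_eq_num]; ring
  have hbd : (b * d ^ 2) ^ 2 = (c * d) ^ 4 - (a * d) ^ 4 := by linear_combination d ^ 4 * h
  obtain ⟨B, hB⟩ : IsSquare ((c.num * a.den) ^ 4 - (a.num * c.den) ^ 4) :=
    Rat.isSquare_intCast_iff.mp ⟨b * d ^ 2, by push_cast [← hA, ← hC, ← hbd]; ring⟩
  have hbB : (b * d ^ 2) ^ 2 = (B : ℚ) ^ 2 := by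
    rw [hbd, hA, hC, sq, ← Int.cast_mul, ← hB]; push_cast; ring
  refine not_fermatRightTriangle (a.num * c.den) B (c.num * a.den) ⟨?_, ?_, ?_⟩
  · exact_mod_cast hA ▸ mul_ne_zero ha hd
  · rintro rfl
    simp [hb, hd] at hbB
  · linear_combination -hB

/-- The only rational points on `z² = (s² + 2s - 1)(s² - 2s - 1)` are the trivial ones:
`s = 0` (and then `z = ±1`). -/
theorem rational_points_quartic_32a2 (s z : ℚ)
    (h : z ^ 2 = (s ^ 2 + 2 * s - 1) * (s ^ 2 - 2 * s - 1)) :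
    s = 0 := by
  by_contra hs
  have hz : z ≠ 0 := by
    rintro rfl
    have h2 : ¬IsSquare (2 : ℚ) := by norm_num
    rw [zero_pow two_ne_zero, eq_comm, mul_eq_zero] at h
    rcases h with h1 | h1
    · exact h2 ⟨s + 1, by linear_combination -h1⟩
    · exact h2 ⟨s - 1, by linear_combination -h1⟩
  exact Rat.pow_four_add_sq_ne_pow_four (a := 2 * s) (b := z * (s ^ 2 + 1)) (c := s ^ 2 - 1)
    (mul_ne_zero two_ne_zero hs) (mul_ne_zero hz (by positivity))
    (by linear_combination (s ^ 2 + 1) ^ 2 * h)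
end

section
/- For m, z ∈ ℚ: if z² = (m + 1)(m + 2)(m + 3), then z = 0 (so m ∈ {−1, −2, −3}); and likewise if z² = −(m + 1)(m + 2)(m + 3), then z = 0. -/
/-!
Both curves become `z² = x³ - x` under `x = ±(m + 2)`. Writing `x = p / q` in lowest terms turns
a rational point into an integer solution of `w² = p q (p² - q²)`; the three factors are pairwise
coprime, so `p = ±c²`, `q = ±d²`, `p² - q² = ±b²`, whence `c⁴ - d⁴ = ±b²` with `c, d` coprime.
By Fermat's descent, `x⁴ - y⁴ = z²` has no primitive solution with `y z ≠ 0`: parametrising the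
Pythagorean triple `(y², z, x²)` (once more for `y` even) yields a solution with smaller `|x|`.
-/

namespace Int

theorem exists_sq_of_isCoprime_of_mul_eq_sq {a b c : ℤ} (hab : IsCoprime a b) (ha : 0 ≤ a)
    (h : a * b = c ^ 2) : ∃ d, a = d ^ 2 := by
  obtain ⟨d, hd | hd⟩ := Int.sq_of_isCoprime hab h
  · exact ⟨d, hd⟩
  · exact ⟨d, by linarith [sq_nonneg d]⟩

theorem odd_of_isCoprime_of_even_s13 {a b : ℤ} (hab : IsCoprime a b) (ha : Even a) : Odd b :=
  Int.isCoprime_two_left.mp (hab.of_isCoprime_of_dvd_left ha.two_dvd)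

end Int

structure NontrivialQuarticDiffSq (x y z : ℤ) : Prop where
  isCoprime : IsCoprime x y
  y_ne_zero : y ≠ 0
  z_ne_zero : z ≠ 0
  eq : x ^ 4 - y ^ 4 = z ^ 2

namespace NontrivialQuarticDiffSq

variable {x y z : ℤ}

theorem isCoprime_right (h : NontrivialQuarticDiffSq x y z) : IsCoprime y z := by
  have hyx : IsCoprime (y ^ 4) (x ^ 4 + y ^ 4 * (-1)) :=
    h.isCoprime.symm.pow.add_mul_left_right (-1)
  rw [show x ^ 4 + y ^ 4 * -1 = z ^ 2 by linear_combination h.eq] at hyx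
  exact IsCoprime.pow_iff (by norm_num) (by norm_num) |>.mp hyx

theorem pythagoreanTriple (h : NontrivialQuarticDiffSq x y z) :
    PythagoreanTriple (y ^ 2) z (x ^ 2) := by
  unfold PythagoreanTriple; linear_combination -h.eq

theorem x_ne_zero (h : NontrivialQuarticDiffSq x y z) : x ≠ 0 := by
  rintro rfl
  have hy : 0 < y ^ 4 := by have := h.y_ne_zero; positivity
  nlinarith [h.eq, sq_nonneg z]

theorem exists_smaller_of_odd (h : NontrivialQuarticDiffSq x y z) (hy : Odd y) :
    ∃ x' y' z', NontrivialQuarticDiffSq x' y' z' ∧ x'.natAbs < x.natAbs := by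
  have hx := h.x_ne_zero
  obtain ⟨m, n, hy2, hz, hx2, hmn, -⟩ := PythagoreanTriple.coprime_classification'
    h.pythagoreanTriple (Int.isCoprime_iff_gcd_eq_one.mp h.isCoprime_right.pow_left)
    (Int.odd_iff.mp hy.pow) (by positivity)
  have hn : n ≠ 0 := by rintro rfl; exact h.z_ne_zero (by simpa using hz)
  refine ⟨m, n, x * y,
    ⟨Int.isCoprime_iff_gcd_eq_one.mpr hmn, hn, mul_ne_zero hx h.y_ne_zero, ?_⟩, ?_⟩
  · linear_combination (-(m ^ 2 + n ^ 2)) * hy2 - y ^ 2 * hx2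
  · rw [Int.natAbs_lt_iff_sq_lt, hx2]
    have : 0 < n ^ 2 := by positivity
    linarith

theorem exists_smaller_of_sq_add_sq {a b : ℤ} (hab : IsCoprime a b) (ha : a ≠ 0) (hb : Odd b)
    (hx : x ^ 2 = (2 * a ^ 2) ^ 2 + (b ^ 2) ^ 2) :
    ∃ x' y' z', NontrivialQuarticDiffSq x' y' z' ∧ x'.natAbs < x.natAbs := by
  have hx0 : x ≠ 0 := by
    rintro rfl
    have : 0 < a ^ 2 := by positivity
    nlinarith [sq_nonneg (b ^ 2)]
  have htriple : PythagoreanTriple (b ^ 2) (2 * a ^ 2) |x| := by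
    unfold PythagoreanTriple; rw [abs_mul_abs_self]; linear_combination -hx
  have hcop : IsCoprime (b ^ 2) (2 * a ^ 2) :=
    (Int.isCoprime_two_right.mpr hb |>.mul_right hab.symm.pow_right).pow_left
  obtain ⟨r, s, hb2, ha2, hxrs, hrs, -, hr⟩ := PythagoreanTriple.coprime_classification' htriple
    (Int.isCoprime_iff_gcd_eq_one.mp hcop) (Int.odd_iff.mp hb.pow) (abs_pos.mpr hx0)
  have hrs_pos : 0 < r * s := by
    have : 0 < a ^ 2 := by positivity
    linarith
  have hr0 : 0 < r := lt_of_le_of_ne hr (by rintro rfl; simp at hrs_pos)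
  have hs0 : 0 < s := pos_of_mul_pos_right hrs_pos hr
  have hrs' : IsCoprime r s := Int.isCoprime_iff_gcd_eq_one.mpr hrs
  obtain ⟨c, rfl⟩ := Int.exists_sq_of_isCoprime_of_mul_eq_sq hrs' hr0.le
    (by linarith : r * s = a ^ 2)
  obtain ⟨d, rfl⟩ := Int.exists_sq_of_isCoprime_of_mul_eq_sq hrs'.symm hs0.le
    (by linarith : s * c ^ 2 = a ^ 2)
  refine ⟨c, d, b, ⟨IsCoprime.pow_iff (by norm_num) (by norm_num) |>.mp hrs', ?_, ?_, ?_⟩, ?_⟩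
  · rintro rfl; simp at hs0
  · rintro rfl; simp at hb
  · linear_combination -hb2
  · have hcx : (c.natAbs : ℤ) < x.natAbs := by
      rw [Int.natCast_natAbs x, hxrs]
      nlinarith [Int.natAbs_le_self_sq c]
    exact_mod_cast hcx

theorem exists_smaller_of_sq_eq_two_mul {m n : ℤ} (hmn : IsCoprime m n) (hm : 0 < m) (hn : 0 < n)
    (hme : Even m) (hy : y ^ 2 = 2 * m * n) (hx : x ^ 2 = m ^ 2 + n ^ 2) :
    ∃ x' y' z', NontrivialQuarticDiffSq x' y' z' ∧ x'.natAbs < x.natAbs := by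
  obtain ⟨k, rfl⟩ := hme
  obtain ⟨w, rfl⟩ : Even y :=
    (Int.even_pow' two_ne_zero).mp ⟨(k + k) * n, by linear_combination hy⟩
  have hkn : k * n = w ^ 2 := mul_left_cancel₀ four_ne_zero (by linear_combination -hy)
  have hk : 0 < k := by linarith
  have hkn' : IsCoprime k n := hmn.of_isCoprime_of_dvd_left (dvd_add_self_left.mpr dvd_rfl)
  obtain ⟨a, rfl⟩ := Int.exists_sq_of_isCoprime_of_mul_eq_sq hkn' hk.le hkn
  obtain ⟨b, rfl⟩ := Int.exists_sq_of_isCoprime_of_mul_eq_sq hkn'.symm hn.le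
    (by linear_combination hkn : n * a ^ 2 = w ^ 2)
  refine exists_smaller_of_sq_add_sq (IsCoprime.pow_iff (by norm_num) (by norm_num) |>.mp hkn')
    (by rintro rfl; simp at hk) ?_ (by linear_combination hx)
  exact (Int.odd_pow' two_ne_zero).mp (Int.odd_of_isCoprime_of_even_s13 hmn ⟨a ^ 2, rfl⟩)

theorem exists_smaller_of_even (h : NontrivialQuarticDiffSq x y z) (hy : Even y) :
    ∃ x' y' z', NontrivialQuarticDiffSq x' y' z' ∧ x'.natAbs < x.natAbs := by
  have hx := h.x_ne_zero
  have hz : Odd z := Int.odd_of_isCoprime_of_even_s13 h.isCoprime_right hy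
  obtain ⟨m, n, -, hy2, hx2, hmn, hpar, hm⟩ := PythagoreanTriple.coprime_classification'
    h.pythagoreanTriple.symm (Int.isCoprime_iff_gcd_eq_one.mp h.isCoprime_right.symm.pow_right)
    (Int.odd_iff.mp hz) (by positivity)
  have hmn_pos : 0 < m * n := by
    have : 0 < y ^ 2 := by have := h.y_ne_zero; positivity
    linarith
  have hm0 : 0 < m := lt_of_le_of_ne hm (by rintro rfl; simp at hmn_pos)
  have hn0 : 0 < n := pos_of_mul_pos_right hmn_pos hm
  have hmn' : IsCoprime m n := Int.isCoprime_iff_gcd_eq_one.mpr hmn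
  rcases hpar with ⟨hme, -⟩ | ⟨-, hne⟩
  · exact exists_smaller_of_sq_eq_two_mul hmn' hm0 hn0 (Int.even_iff.mpr hme) hy2 hx2
  · exact exists_smaller_of_sq_eq_two_mul hmn'.symm hn0 hm0 (Int.even_iff.mpr hne)
      (by linear_combination hy2 : y ^ 2 = 2 * n * m)
      (by linear_combination hx2 : x ^ 2 = n ^ 2 + m ^ 2)

theorem exists_smaller (h : NontrivialQuarticDiffSq x y z) :
    ∃ x' y' z', NontrivialQuarticDiffSq x' y' z' ∧ x'.natAbs < x.natAbs :=
  (Int.even_or_odd y).elim h.exists_smaller_of_even h.exists_smaller_of_odd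

theorem not_nontrivialQuarticDiffSq (x y z : ℤ) : ¬ NontrivialQuarticDiffSq x y z := by
  intro h
  induction hx : x.natAbs using Nat.strong_induction_on generalizing x y z with
  | _ n ih =>
    obtain ⟨x', y', z', h', hlt⟩ := h.exists_smaller
    exact ih _ (hx ▸ hlt) x' y' z' h' rfl

end NontrivialQuarticDiffSq

theorem Int.eq_zero_or_eq_zero_of_pow_four_sub_pow_four_eq_sq {x y z : ℤ} (hxy : IsCoprime x y)
    (h : x ^ 4 - y ^ 4 = z ^ 2) : y = 0 ∨ z = 0 := by
  by_contra! hyz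
  exact NontrivialQuarticDiffSq.not_nontrivialQuarticDiffSq x y z ⟨hxy, hyz.1, hyz.2, h⟩

theorem Int.eq_zero_of_sq_eq_mul_mul_sq_sub_sq {p q w : ℤ} (hpq : IsCoprime p q)
    (h : w ^ 2 = p * q * (p ^ 2 - q ^ 2)) : w = 0 := by
  have hp : IsCoprime p (p ^ 2 - q ^ 2) := by
    have := (hpq.pow_right (n := 2)).neg_right.add_mul_left_right p
    rwa [neg_add_eq_sub, ← sq] at this
  have hq : IsCoprime q (p ^ 2 - q ^ 2) := by
    have := (hpq.symm.pow_right (n := 2)).add_mul_left_right (-q)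
    rwa [mul_neg, ← sq, ← sub_eq_add_neg] at this
  obtain ⟨c, hc⟩ := Int.sq_of_isCoprime (hpq.mul_right hp)
    (by linear_combination -h : p * (q * (p ^ 2 - q ^ 2)) = w ^ 2)
  obtain ⟨d, hd⟩ := Int.sq_of_isCoprime (hpq.symm.mul_right hq)
    (by linear_combination -h : q * (p * (p ^ 2 - q ^ 2)) = w ^ 2)
  obtain ⟨b, hb⟩ := Int.sq_of_isCoprime (hp.symm.mul_right hq.symm)
    (by linear_combination -h : (p ^ 2 - q ^ 2) * (p * q) = w ^ 2)
  have hcd : IsCoprime c d := by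
    refine hpq.mono ?_ ?_
    · rcases hc with rfl | rfl <;> simp [sq]
    · rcases hd with rfl | rfl <;> simp [sq]
  have hp2 : p ^ 2 = (c ^ 2) ^ 2 := by rcases hc with rfl | rfl <;> ring
  have hq2 : q ^ 2 = (d ^ 2) ^ 2 := by rcases hd with rfl | rfl <;> ring
  have hb2 : (p ^ 2 - q ^ 2) ^ 2 = (b ^ 2) ^ 2 := by rcases hb with h | h <;> simp [h]
  -- squaring discards the unknown signs in `hc`, `hd` and `hb`
  have hw : w ^ 4 = (c * d * b) ^ 4 := by
    linear_combination (w ^ 2 + p * q * (p ^ 2 - q ^ 2)) * h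
      + (q ^ 2 * (p ^ 2 - q ^ 2) ^ 2) * hp2 + (c ^ 4 * (p ^ 2 - q ^ 2) ^ 2) * hq2
      + c ^ 4 * d ^ 4 * hb2
  suffices c * d * b = 0 by simpa [this] using hw
  rcases hb with hb | hb
  · rcases Int.eq_zero_or_eq_zero_of_pow_four_sub_pow_four_eq_sq hcd
      (by linear_combination hb + hq2 - hp2 : c ^ 4 - d ^ 4 = b ^ 2) with h0 | h0 <;> simp [h0]
  · rcases Int.eq_zero_or_eq_zero_of_pow_four_sub_pow_four_eq_sq hcd.symm
      (by linear_combination hp2 - hq2 - hb : d ^ 4 - c ^ 4 = b ^ 2) with h0 | h0 <;> simp [h0]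

theorem Rat.eq_zero_of_sq_eq_pow_three_sub_self {x z : ℚ} (h : z ^ 2 = x ^ 3 - x) : z = 0 := by
  have hY : ((x.num * x.den * (x.num ^ 2 - x.den ^ 2) : ℤ) : ℚ) =
      (z * x.den ^ 2) * (z * x.den ^ 2) := by
    push_cast
    rw [← Rat.mul_den_eq_num x]
    linear_combination -(x.den : ℚ) ^ 4 * h
  obtain ⟨w, hw⟩ := Rat.isSquare_intCast_iff.mp ⟨_, hY⟩
  have hw0 := Int.eq_zero_of_sq_eq_mul_mul_sq_sub_sq (Rat.isCoprime_num_den x) (by rw [hw]; ring)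
  rw [hw, hw0, mul_zero, Int.cast_zero, eq_comm, mul_self_eq_zero] at hY
  simpa using hY

/-- For rationals `m, z`: if `z² = (m + 1)(m + 2)(m + 3)` then `z = 0`, and likewise if
`z² = -(m + 1)(m + 2)(m + 3)` then `z = 0`. -/
theorem rational_points_cubic_32a2 (m z : ℚ) :
    (z ^ 2 = (m + 1) * (m + 2) * (m + 3) → z = 0) ∧
    (z ^ 2 = -((m + 1) * (m + 2) * (m + 3)) → z = 0) :=
  ⟨fun h => Rat.eq_zero_of_sq_eq_pow_three_sub_self (x := m + 2) (by linear_combination h),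
    fun h => Rat.eq_zero_of_sq_eq_pow_three_sub_self (x := -(m + 2)) (by linear_combination h)⟩
end
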